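/- For every positive integer p and every real h, det_{0≤i,j<p}( (−1)^i H_{i+j}(0) − H_{i+j}(0) e^{−h²} ) = 2^{C(p,2)} ( Π_{j=0}^{p−1} j! ) (1 − e^{−2h²})^{⌊p/2⌋} (1 − e^{−h²})^{⌈p/2⌉ − ⌊p/2⌋}, where C(p,2) = p(p−1)/2. -/

import Mathlib

/-!
The matrix is `diag((-1)^i - e^{-h²})` times the Hankel matrix `(H_{i+j}(0))`. The numbers
`H_n(0)` are the moments of the orthogonal polynomial family `x P_k = P_{k+1} - 2k P_{k-1}`:
expanding `x^i = Σ_k T_{ik} P_k` with `T` unitriangular writes the Hankel matrix as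
`T D Tᵀ` with `D_k = ∏_{j<k} (-2(j+1)) = (-2)^k k!`, the squared norms of the `P_k`. On the
diagonal factor, consecutive entries pair up as `(1 - e)(-1 - e) = -(1 - e²)`.
-/

open scoped BigOperators

/-- The `k`-th physicists' Hermite polynomial, via
`H_k(z)/k! = Σ_m ((-1)^(k-m)/(k-m)!) (2z)^(2m-k)/(2m-k)!` (terms with negative
factorial arguments being zero). -/
noncomputable def hermiteH (k : ℕ) (z : ℝ) : ℝ :=
  (k.factorial : ℝ) * ∑ m ∈ Finset.range (k+1),
    if k ≤ 2*m then ((-1:ℝ)^(k-m) / (k-m).factorial) * ((2*z)^(2*m-k) / (2*m-k).factorial)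
    else 0

open Finset Matrix

section StieltjesTable

variable {R : Type*} [CommRing R] (β : ℕ → R)

/-- For monic `P_k` with `x P_k = P_{k+1} + β_{k-1} P_{k-1}`, this maps the coefficients of `f`
in the basis `(P_k)` to those of `x f`. Hence `stieltjesTable β i` holds the coefficients of
`x^i`, `stieltjesTable β n 0` is the `n`-th moment and `jacobiWeight β k` is the squared norm
of `P_k`. -/
def jacobiShift (u : ℕ → R) : ℕ → R
  | 0 => β 0 * u 1
  | k + 1 => u k + β (k + 1) * u (k + 2)

def stieltjesTable : ℕ → ℕ → R
  | 0 => Pi.single 0 1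
  | i + 1 => jacobiShift β (stieltjesTable i)

def jacobiWeight (k : ℕ) : R := ∏ j ∈ range k, β j

lemma stieltjesTable_succ_zero (i : ℕ) :
    stieltjesTable β (i + 1) 0 = β 0 * stieltjesTable β i 1 :=
  rfl

lemma stieltjesTable_succ_succ (i k : ℕ) :
    stieltjesTable β (i + 1) (k + 1) =
      stieltjesTable β i k + β (k + 1) * stieltjesTable β i (k + 2) :=
  rfl

lemma jacobiWeight_succ (k : ℕ) : jacobiWeight β (k + 1) = jacobiWeight β k * β k :=
  prod_range_succ _ _

lemma stieltjesTable_eq_zero_of_lt {i k : ℕ} (h : i < k) : stieltjesTable β i k = 0 := by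
  induction i generalizing k with
  | zero => simp [stieltjesTable, h.ne']
  | succ i ih =>
    obtain ⟨k, rfl⟩ := Nat.exists_eq_add_one_of_ne_zero (by omega : k ≠ 0)
    rw [stieltjesTable_succ_succ, ih (by omega), ih (by omega), mul_zero, add_zero]

lemma stieltjesTable_self (i : ℕ) : stieltjesTable β i i = 1 := by
  induction i with
  | zero => simp [stieltjesTable]
  | succ i ih =>
    rw [stieltjesTable_succ_succ, ih, stieltjesTable_eq_zero_of_lt β (by omega), mul_zero, add_zero]

/-- Multiplication by `x` is self-adjoint: the defect telescopes. -/
lemma sum_jacobiShift_mul_eq {u : ℕ → R} (v : ℕ → R) {N : ℕ} (hN : u N = 0)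
    (hN' : u (N + 1) = 0) :
    ∑ k ∈ range (N + 1), jacobiShift β u k * v k * jacobiWeight β k =
      ∑ k ∈ range (N + 1), u k * jacobiShift β v k * jacobiWeight β k := by
  set G : ℕ → R := fun k => jacobiWeight β (k + 1) * (u k * v (k + 1) - u (k + 1) * v k)
  have hstep : ∀ k, jacobiShift β u (k + 1) * v (k + 1) * jacobiWeight β (k + 1) -
      u (k + 1) * jacobiShift β v (k + 1) * jacobiWeight β (k + 1) = G k - G (k + 1) := by
    intro k
    simp only [G, jacobiShift, jacobiWeight_succ β (k + 1)]
    ring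
  rw [← sub_eq_zero, ← sum_sub_distrib, sum_range_succ', sum_congr rfl fun k _ => hstep k,
    sum_range_sub']
  simp [G, jacobiShift, jacobiWeight, hN, hN']
  ring

lemma sum_stieltjesTable_mul {i N : ℕ} (j : ℕ) (h : i < N) :
    ∑ k ∈ range N, stieltjesTable β i k * stieltjesTable β j k * jacobiWeight β k =
      stieltjesTable β (i + j) 0 := by
  induction i generalizing j with
  | zero => simp [stieltjesTable, Pi.single_apply, jacobiWeight, h]
  | succ i ih =>
    obtain ⟨M, rfl⟩ := Nat.exists_eq_add_one_of_ne_zero (by omega : N ≠ 0)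
    rw [stieltjesTable, sum_jacobiShift_mul_eq β _ (stieltjesTable_eq_zero_of_lt β (by omega))
      (stieltjesTable_eq_zero_of_lt β (by omega)), show i + 1 + j = i + (j + 1) by omega, ← ih (j + 1) (by omega)]
    rfl

theorem det_hankel_stieltjesTable (p : ℕ) :
    det (of fun i j : Fin p => stieltjesTable β (i + j) 0) = ∏ k ∈ range p, jacobiWeight β k := by
  set L : Matrix (Fin p) (Fin p) R := of fun i k => stieltjesTable β i k
  have hLDL : (of fun i j : Fin p => stieltjesTable β (i + j) 0) =
      L * diagonal (fun k : Fin p => jacobiWeight β k) * Lᵀ := by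
    ext i j
    rw [of_apply, ← sum_stieltjesTable_mul β j i.isLt, ← Fin.sum_univ_eq_sum_range]
    simp [L, mul_apply, diagonal_apply, mul_right_comm]
  have hL : L.det = 1 := by
    rw [det_of_isLowerTriangular L fun i k hik => stieltjesTable_eq_zero_of_lt β hik]
    simp [L, stieltjesTable_self]
  rw [hLDL, det_mul, det_mul, det_transpose, hL, det_diagonal,
    Fin.prod_univ_eq_prod_range (jacobiWeight β)]
  ring

end StieltjesTable

section HermiteMoments

variable {R : Type*} [CommRing R] (c : R)

lemma jacobiWeight_mul_succ (k : ℕ) :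
    jacobiWeight (fun j => c * (j + 1)) k = c ^ k * k.factorial := by
  simp [jacobiWeight, prod_mul_distrib, ← prod_range_add_one_eq_factorial]

lemma prod_jacobiWeight_mul_succ (p : ℕ) :
    ∏ k ∈ range p, jacobiWeight (fun j => c * (j + 1)) k =
      c ^ p.choose 2 * ∏ k ∈ range p, (k.factorial : R) := by
  simp only [jacobiWeight_mul_succ, prod_mul_distrib]
  rw [prod_pow_eq_pow_sum, sum_range_id, Nat.choose_two_right]

/-- For `β_k = c (k + 1)` the family is Appell, `P_k' = k P_{k-1}`; this is the derivative of
`x^{i+1}` read in the basis `(P_k)`. -/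
lemma natCast_succ_mul_stieltjesTable_succ_succ (i k : ℕ) :
    ((k : R) + 1) * stieltjesTable (fun j => c * (j + 1)) (i + 1) (k + 1) =
      ((i : R) + 1) * stieltjesTable (fun j => c * (j + 1)) i k := by
  induction i generalizing k with
  | zero => cases k <;> simp [stieltjesTable, jacobiShift]
  | succ i ih =>
    have h2 := ih (k + 1)
    rw [stieltjesTable_succ_succ _ (i + 1)]
    cases k with
    | zero =>
      rw [stieltjesTable_succ_zero]
      push_cast at *
      linear_combination c * h2
    | succ k =>
      have h0 := ih k
      have h1 := stieltjesTable_succ_succ (fun j => c * ((j : R) + 1)) i k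
      push_cast at *
      linear_combination c * (k + 2) * h2 + h0 - (i + 1) * h1

lemma stieltjesTable_add_two_zero (n : ℕ) :
    stieltjesTable (fun j => c * ((j : R) + 1)) (n + 2) 0 =
      c * (n + 1) * stieltjesTable (fun j => c * ((j : R) + 1)) n 0 := by
  have h := natCast_succ_mul_stieltjesTable_succ_succ c n 0
  rw [stieltjesTable_succ_zero]
  push_cast at *
  linear_combination c * h

end HermiteMoments

lemma hermiteH_zero_eq (k : ℕ) :
    hermiteH k 0 = k.factorial * ∑ m ∈ range (k + 1), if 2 * m = k then
      (-1 : ℝ) ^ (k - m) / (k - m).factorial else 0 := by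
  refine congrArg _ (sum_congr rfl fun m _ => ?_)
  rcases lt_trichotomy (2 * m) k with hlt | rfl | hgt
  · simp [hlt.not_ge, hlt.ne]
  · simp
  · simp [hgt.le, hgt.ne', Nat.sub_ne_zero_of_lt hgt]

lemma hermiteH_two_mul_zero (n : ℕ) :
    hermiteH (2 * n) 0 = (-1) ^ n * (2 * n).factorial / n.factorial := by
  rw [hermiteH_zero_eq, sum_eq_single n (fun m _ hm => if_neg (by omega))
    (fun hn => absurd (mem_range.mpr (by omega)) hn), if_pos rfl, two_mul, Nat.add_sub_cancel]
  ring

lemma hermiteH_two_mul_add_one_zero (n : ℕ) : hermiteH (2 * n + 1) 0 = 0 := by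
  rw [hermiteH_zero_eq, sum_eq_zero fun m _ => if_neg (by omega), mul_zero]

lemma hermiteH_add_two_zero (n : ℕ) : hermiteH (n + 2) 0 = -2 * (n + 1) * hermiteH n 0 := by
  obtain ⟨m, rfl | rfl⟩ := Nat.even_or_odd' n
  · rw [show 2 * m + 2 = 2 * (m + 1) by ring, hermiteH_two_mul_zero, hermiteH_two_mul_zero,
      show 2 * (m + 1) = 2 * m + 1 + 1 by ring, Nat.factorial_succ, Nat.factorial_succ,
      Nat.factorial_succ]
    push_cast
    field_simp
    ring
  · rw [show 2 * m + 1 + 2 = 2 * (m + 1) + 1 by ring, hermiteH_two_mul_add_one_zero,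
      hermiteH_two_mul_add_one_zero, mul_zero]

lemma stieltjesTable_neg_two_zero (n : ℕ) :
    stieltjesTable (fun j => -2 * ((j : ℝ) + 1)) n 0 = hermiteH n 0 := by
  induction n using Nat.twoStepInduction with
  | zero => simp [stieltjesTable, hermiteH]
  | one => simpa [stieltjesTable, jacobiShift] using (hermiteH_two_mul_add_one_zero 0).symm
  | more n ih _ => rw [stieltjesTable_add_two_zero, hermiteH_add_two_zero, ih]

lemma prod_range_neg_one_pow_sub {R : Type*} [CommRing R] (e : R) (p : ℕ) :
    ∏ i ∈ range p, ((-1) ^ i - e) =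
      (-1) ^ p.choose 2 * (1 - e ^ 2) ^ (p / 2) * (1 - e) ^ ((p + 1) / 2 - p / 2) := by
  induction p using Nat.twoStepInduction with
  | zero => simp
  | one => simp
  | more p ih _ =>
    have hchoose : (p + 2).choose 2 = p.choose 2 + 2 * p + 1 := by
      rw [Nat.choose_succ_succ, Nat.choose_succ_succ p 1]
      simp only [Nat.choose_one_right]
      ring
    have hsign : (-1 : R) ^ (p.choose 2 + 2 * p + 1) = -(-1) ^ p.choose 2 := by
      rw [pow_succ, pow_add, pow_mul]
      simp
    have hsq : ((-1 : R) ^ p) ^ 2 = 1 := by rw [← pow_mul, pow_mul']; simp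
    rw [prod_range_succ, prod_range_succ, ih, hchoose, hsign, Nat.add_div_right p two_pos,
      show (p + 2 + 1) / 2 - (p / 2 + 1) = (p + 1) / 2 - p / 2 by omega]
    linear_combination -((-1 : R) ^ p.choose 2 * (1 - e ^ 2) ^ (p / 2) *
      (1 - e) ^ ((p + 1) / 2 - p / 2)) * hsq

theorem stmt11_general (p : ℕ) (h : ℝ) :
    Matrix.det (Matrix.of fun i j : Fin p =>
        (-1:ℝ)^(i : ℕ) * hermiteH ((i : ℕ)+(j : ℕ)) 0
          - hermiteH ((i : ℕ)+(j : ℕ)) 0 * Real.exp (-h^2)) =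
      2^(p.choose 2) * (∏ j ∈ Finset.range p, (j.factorial : ℝ)) *
        (1 - Real.exp (-2*h^2))^(p/2) * (1 - Real.exp (-h^2))^((p+1)/2 - p/2) := by
  set e := Real.exp (-h ^ 2)
  have hexp : Real.exp (-2 * h ^ 2) = e ^ 2 := by rw [← Real.exp_nat_mul]; ring_nf
  have hsign : (-2 : ℝ) ^ p.choose 2 * (-1) ^ p.choose 2 = 2 ^ p.choose 2 := by
    rw [← mul_pow]; norm_num
  have hM : (of fun i j : Fin p => (-1 : ℝ) ^ (i : ℕ) * hermiteH (i + j) 0 - hermiteH (i + j) 0 * e)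
      = diagonal (fun i : Fin p => (-1) ^ (i : ℕ) - e) *
          of fun i j : Fin p => stieltjesTable (fun k => -2 * ((k : ℝ) + 1)) (i + j) 0 := by
    ext i j
    simp only [diagonal_mul, of_apply, stieltjesTable_neg_two_zero]
    ring
  rw [hM, det_mul, det_diagonal, det_hankel_stieltjesTable, prod_jacobiWeight_mul_succ,
    Fin.prod_univ_eq_prod_range (fun i => (-1 : ℝ) ^ i - e), prod_range_neg_one_pow_sub, hexp,
    ← hsign]
  ring

/-- `det_{0≤i,j<p}( (-1)^i H_{i+j}(0) - H_{i+j}(0)e^{-h²} )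
  = 2^{C(p,2)} (Π_{j<p} j!) (1-e^{-2h²})^{⌊p/2⌋} (1-e^{-h²})^{⌈p/2⌉-⌊p/2⌋}`. -/
theorem stmt11 (p : ℕ) (hp : 0 < p) (h : ℝ) :
    Matrix.det (Matrix.of fun i j : Fin p =>
        (-1:ℝ)^(i : ℕ) * hermiteH ((i : ℕ)+(j : ℕ)) 0
          - hermiteH ((i : ℕ)+(j : ℕ)) 0 * Real.exp (-h^2)) =
      2^(p.choose 2) * (∏ j ∈ Finset.range p, (j.factorial : ℝ)) *
        (1 - Real.exp (-2*h^2))^(p/2) * (1 - Real.exp (-h^2))^((p+1)/2 - p/2) :=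
  stmt11_general p h
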